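/- In the real twisted group algebra on the dyadic group G_n (nonnegative integers < 2^n under xor) with the Cayley-Dickson twist, every element x satisfies x·conj(x) = conj(x)·x = ‖x‖², where ‖x‖² = Σ_p x_p² and conj(x) = 2x_0·1 - x. Consequently x² = 2x_0·x - ‖x‖². -/

import Mathlib

/-!
The twist satisfies γ(0,q) = γ(p,0) = 1, γ(p,p) = -1 for p ≠ 0, and γ(q,p) = -γ(p,q) for distinct
nonzero p, q (by induction on the binary digits). Hence conj(x) = 2x₀ - x, and in the coefficient of
i_r, r ≠ 0, of x·conj(x) the terms for p and p ⊕ r cancel, while the coefficient of i_0 is Σ x_p².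
Since conj is an involution preserving Σ x_p², the same holds for conj(x)·x, and
x² = x·(2x₀ - conj(x)) = 2x₀x - ‖x‖².
-/

/-- The Cayley–Dickson twist on ℕ (group operation: bitwise xor), defined by the
recursion γ(0,0)=1, γ(2r,2s)=γ(r,s), γ(2r,2s+1)=-γ(r,s) for r≠0, γ(0,2s+1)=1,
γ(2r+1,2s)=γ(s,r), γ(2r+1,2s+1)=γ(s,r) for r≠0, γ(1,2s+1)=-1. -/
def cd (p q : ℕ) : ℤ :=
  if hp2 : p % 2 = 0 then
    if hq2 : q % 2 = 0 then
      if hpq : p = 0 ∧ q = 0 then 1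
      else cd (p / 2) (q / 2)
    else
      if hp : p = 0 then 1 else -cd (p / 2) (q / 2)
  else
    if hq2 : q % 2 = 0 then cd (q / 2) (p / 2)
    else if hp : p = 1 then -1 else cd (q / 2) (p / 2)
termination_by p + q
decreasing_by all_goals omega

open Finset

/-- Xor on `Fin (2^n)` (the dyadic group `G_n`). -/
def xorFin {n : ℕ} (p q : Fin (2 ^ n)) : Fin (2 ^ n) :=
  ⟨p.val ^^^ q.val, Nat.xor_lt_two_pow p.isLt q.isLt⟩

/-- The twisted (Cayley–Dickson) product on `Fin (2^n) → ℝ`: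
`(x*y)_r = ∑_{p ^^^ q = r} γ(p,q) x_p y_q`. -/
def cdMul {n : ℕ} (x y : Fin (2 ^ n) → ℝ) : Fin (2 ^ n) → ℝ :=
  fun r => ∑ p : Fin (2 ^ n), (cd p.val (p.val ^^^ r.val) : ℝ) * x p * y (xorFin p r)

/-- The conjugate `conj(x) = ∑_p γ(p,p) x_p i_p`. -/
def cdConj {n : ℕ} (x : Fin (2 ^ n) → ℝ) : Fin (2 ^ n) → ℝ :=
  fun p => (cd p.val p.val : ℝ) * x p

/-- The unit scalar `1 = i_0`. -/
def cdOne {n : ℕ} : Fin (2 ^ n) → ℝ :=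
  fun p => if p.val = 0 then 1 else 0

lemma cd_even_even (r s : ℕ) : cd (2 * r) (2 * s) = cd r s := by
  rw [cd]
  simp only [Nat.mul_mod_right, Nat.mul_div_cancel_left _ two_pos, dite_true]
  split_ifs with h
  · obtain ⟨rfl, rfl⟩ : r = 0 ∧ s = 0 := by omega
    rw [cd]; simp
  · rfl

lemma cd_odd_even (r s : ℕ) : cd (2 * r + 1) (2 * s) = cd s r := by
  rw [cd]
  simp [Nat.add_mod, Nat.mul_add_div two_pos]

lemma cd_even_odd {r : ℕ} (s : ℕ) (hr : r ≠ 0) : cd (2 * r) (2 * s + 1) = -cd r s := by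
  rw [cd]
  simp [Nat.add_mod, Nat.mul_add_div two_pos, hr]

lemma cd_odd_odd (r s : ℕ) (hr : r ≠ 0) : cd (2 * r + 1) (2 * s + 1) = cd s r := by
  rw [cd]
  simp [Nat.add_mod, Nat.mul_add_div two_pos, hr]

lemma cd_one_odd (s : ℕ) : cd 1 (2 * s + 1) = -1 := by
  rw [cd]
  simp [Nat.add_mod]

lemma cd_zero_left (q : ℕ) : cd 0 q = 1 := by
  induction q using Nat.strong_induction_on with
  | _ q ih =>
    obtain ⟨s, rfl | rfl⟩ := Nat.even_or_odd' q
    · rcases eq_or_ne s 0 with rfl | hs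
      · rw [cd]; simp
      · rw [← Nat.mul_zero 2, cd_even_even]; exact ih s (by omega)
    · rw [cd]; simp [Nat.add_mod]

lemma cd_zero_right (p : ℕ) : cd p 0 = 1 := by
  induction p using Nat.strong_induction_on with
  | _ p ih =>
    obtain ⟨r, rfl | rfl⟩ := Nat.even_or_odd' p
    · rcases eq_or_ne r 0 with rfl | hr
      · exact cd_zero_left 0
      · rw [← Nat.mul_zero 2, cd_even_even]; exact ih r (by omega)
    · rw [← Nat.mul_zero 2, cd_odd_even, cd_zero_left]

lemma cd_self {p : ℕ} (hp : p ≠ 0) : cd p p = -1 := by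
  induction p using Nat.strong_induction_on with
  | _ p ih =>
    obtain ⟨r, rfl | rfl⟩ := Nat.even_or_odd' p
    · rw [cd_even_even]; exact ih r (by omega) (by omega)
    · rcases eq_or_ne r 0 with rfl | hr
      · exact cd_one_odd 0
      · rw [cd_odd_odd r r hr]; exact ih r (by omega) hr

lemma cd_self_mul_self {R : Type*} [Ring R] (p : ℕ) : (cd p p : R) * cd p p = 1 := by
  rcases eq_or_ne p 0 with rfl | hp
  · simp [cd_zero_left]
  · simp [cd_self hp]

/-- Distinct imaginary units anticommute. -/
lemma cd_swap {p q : ℕ} (hp : p ≠ 0) (hq : q ≠ 0) (hpq : p ≠ q) : cd q p = -cd p q := by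
  induction p using Nat.strong_induction_on generalizing q with
  | _ p ih =>
    obtain ⟨r, rfl | rfl⟩ := Nat.even_or_odd' p <;> obtain ⟨s, rfl | rfl⟩ := Nat.even_or_odd' q
    · rw [cd_even_even, cd_even_even]
      exact ih r (by omega) (by omega) (by omega) (by omega)
    · rw [cd_odd_even, cd_even_odd s (by omega), neg_neg]
    · rw [cd_odd_even, cd_even_odd r (by omega)]
    · rcases eq_or_ne r 0 with rfl | hr
      · rw [cd_odd_odd s 0 (by omega), cd_zero_left, cd_one_odd, neg_neg]
      rcases eq_or_ne s 0 with rfl | hs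
      · rw [cd_odd_odd r 0 hr, cd_zero_left, cd_one_odd]
      rw [cd_odd_odd r s hr, cd_odd_odd s r hs, ih r (by omega) hr hs (by omega), neg_neg]

lemma cd_mul_cd_self_add_cd_swap_mul_cd_self {p q : ℕ} (hpq : p ≠ q) :
    cd p q * cd q q + cd q p * cd p p = 0 := by
  rcases eq_or_ne p 0 with rfl | hp
  · simp [cd_zero_left, cd_zero_right, cd_self hpq.symm]
  rcases eq_or_ne q 0 with rfl | hq
  · simp [cd_zero_left, cd_zero_right, cd_self hp]
  rw [cd_swap hp hq hpq, cd_self hp, cd_self hq]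
  ring

section

variable {n : ℕ}

lemma xorFin_xorFin_cancel_right (p r : Fin (2 ^ n)) : xorFin (xorFin p r) r = p := by
  simp [xorFin]

lemma xorFin_ne_self (p : Fin (2 ^ n)) {r : Fin (2 ^ n)} (hr : r.val ≠ 0) :
    xorFin p r ≠ p := by
  intro h
  have := congrArg (fun q : Fin (2 ^ n) => q.val ^^^ p.val) h
  simp [xorFin, Nat.xor_comm p.val, hr] at this

/-- The involution `p ↦ p ⊕ r` pairs the terms off. -/
lemma sum_xorFin_eq_zero {M : Type*} [AddCommMonoid M] (f : Fin (2 ^ n) → Fin (2 ^ n) → M)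
    (hf : ∀ p q, p ≠ q → f p q + f q p = 0) {r : Fin (2 ^ n)} (hr : r.val ≠ 0) :
    ∑ p, f p (xorFin p r) = 0 := by
  refine sum_involution (fun p _ => xorFin p r) (fun p _ => ?_) (fun p _ _ => xorFin_ne_self p hr)
    (fun _ _ => mem_univ _) (fun p _ => xorFin_xorFin_cancel_right p r)
  rw [xorFin_xorFin_cancel_right]
  exact hf p _ (xorFin_ne_self p hr).symm

lemma cdMul_apply (x y : Fin (2 ^ n) → ℝ) (r : Fin (2 ^ n)) :
    cdMul x y r = ∑ p : Fin (2 ^ n), (cd p (xorFin p r) : ℝ) * x p * y (xorFin p r) :=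
  rfl

lemma cdConj_eq_smul_cdOne_sub (x : Fin (2 ^ n) → ℝ) :
    cdConj x = (2 * x ⟨0, Nat.pow_pos (by norm_num)⟩) • cdOne - x := by
  funext p
  simp only [cdConj, cdOne, Pi.sub_apply, Pi.smul_apply, smul_eq_mul]
  rcases eq_or_ne p.val 0 with hp | hp
  · obtain rfl : p = ⟨0, Nat.pow_pos (by norm_num)⟩ := Fin.ext hp
    simp [cd_zero_left]
    ring
  · simp [cd_self hp, hp]

lemma cdConj_cdConj (x : Fin (2 ^ n) → ℝ) : cdConj (cdConj x) = x := by
  funext p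
  rw [cdConj, cdConj, ← mul_assoc, cd_self_mul_self, one_mul]

lemma sum_cdConj_sq (x : Fin (2 ^ n) → ℝ) : ∑ p, cdConj x p ^ 2 = ∑ p, x p ^ 2 := by
  refine sum_congr rfl fun p _ => ?_
  rw [cdConj, mul_pow, sq (cd _ _ : ℝ), cd_self_mul_self, one_mul]

lemma cdMul_cdConj_self (x : Fin (2 ^ n) → ℝ) : cdMul x (cdConj x) = (∑ p, x p ^ 2) • cdOne := by
  funext r
  rw [cdMul_apply, Pi.smul_apply, smul_eq_mul, cdOne]
  rcases eq_or_ne r.val 0 with hr | hr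
  · have hxor : ∀ p, xorFin p r = p := fun p => Fin.ext (by simp [xorFin, hr])
    rw [if_pos hr, mul_one]
    refine sum_congr rfl fun p _ => ?_
    rw [hxor, cdConj, sq]
    linear_combination (x p * x p) * cd_self_mul_self (R := ℝ) p
  · rw [if_neg hr, mul_zero]
    refine sum_xorFin_eq_zero (fun p q => (cd p q : ℝ) * x p * cdConj x q) (fun p q hpq => ?_) hr
    have key : (cd p q : ℝ) * cd q q + cd q p * cd p p = 0 := by
      exact_mod_cast cd_mul_cd_self_add_cd_swap_mul_cd_self (Fin.val_injective.ne hpq)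
    simp only [cdConj]
    linear_combination (x p * x q) * key

lemma cdConj_mul_self (x : Fin (2 ^ n) → ℝ) : cdMul (cdConj x) x = (∑ p, x p ^ 2) • cdOne := by
  simpa only [cdConj_cdConj, sum_cdConj_sq] using cdMul_cdConj_self (cdConj x)

lemma cdMul_sub_right (x y z : Fin (2 ^ n) → ℝ) : cdMul x (y - z) = cdMul x y - cdMul x z := by
  funext r
  simp only [cdMul_apply, Pi.sub_apply, ← sum_sub_distrib, mul_sub]

lemma cdMul_smul_right (x y : Fin (2 ^ n) → ℝ) (c : ℝ) : cdMul x (c • y) = c • cdMul x y := by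
  funext r
  simp only [cdMul_apply, Pi.smul_apply, smul_eq_mul, mul_sum]
  exact sum_congr rfl fun p _ => by ring

lemma cdMul_cdOne (x : Fin (2 ^ n) → ℝ) : cdMul x cdOne = x := by
  funext r
  rw [cdMul_apply, sum_eq_single r]
  · simp [cdOne, xorFin, cd_zero_right]
  · intro p _ hpr
    have : (xorFin p r).val ≠ 0 := fun h => hpr (Fin.ext (xor_eq_zero_iff.mp h))
    simp [cdOne, this]
  · simp

end

theorem stmt16 {n : ℕ} (x : Fin (2 ^ n) → ℝ) :
    cdConj x = (2 * x ⟨0, Nat.pow_pos (by norm_num)⟩) • cdOne - x ∧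
    cdMul x (cdConj x) = (∑ p, x p ^ 2) • cdOne ∧
    cdMul (cdConj x) x = (∑ p, x p ^ 2) • cdOne ∧
    cdMul x x = (2 * x ⟨0, Nat.pow_pos (by norm_num)⟩) • x - (∑ p, x p ^ 2) • cdOne := by
  have hconj := cdConj_eq_smul_cdOne_sub x
  refine ⟨hconj, cdMul_cdConj_self x, cdConj_mul_self x, ?_⟩
  calc cdMul x x = cdMul x ((2 * x ⟨0, Nat.pow_pos (by norm_num)⟩) • cdOne - cdConj x) := by
        rw [hconj, sub_sub_cancel]
    _ = _ := by rw [cdMul_sub_right, cdMul_smul_right, cdMul_cdOne, cdMul_cdConj_self]
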